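/- arXiv:1909.07616 — 2 statements merged into one kernel-verified Lean document; each statement's English description precedes it below -/
import Mathlib

section
/- Let θ₁,…,θ_M be i.i.d. uniform on [0,2π) and u ∈ ℂ^M a fixed unit vector. Set X = |∑_{m=1}^M (1/√M) e^{-iθ_m} u_m|. Then for every h ∈ [0, M/2), E[e^{h X²}] ≤ (1 - 2h/M)^{-1/2}. -/
/-!
Expanding `|∑ₘ e^{-iθₘ} uₘ|^{2k}` by the multinomial theorem, independence and the orthogonality
`E[e^{inθ}] = δₙ₀` of uniform phases kill every off-diagonal term, leaving
`E|∑ₘ e^{-iθₘ} uₘ|^{2k} = ∑_α (k choose α)² ∏ₘ |uₘ|^{2αₘ} ≤ k! ‖u‖^{2k}`, the moments of a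
standard complex Gaussian. Summing the exponential series gives `E[e^{hX²}] ≤ (1 - h/M)⁻¹`,
which is at most `(1 - 2h/M)^{-1/2}` since `(1 - r)² ≥ 1 - 2r`.
-/

open MeasureTheory ProbabilityTheory Complex Finset

/-- The uniform probability measure on `[0, 2π)`. -/
noncomputable def uniformAngle : Measure ℝ :=
  ENNReal.ofReal (2 * Real.pi)⁻¹ • MeasureTheory.volume.restrict (Set.Ico 0 (2 * Real.pi))

open ComplexConjugate
open scoped Nat

instance isProbabilityMeasure_uniformAngle : IsProbabilityMeasure uniformAngle := by
  constructor
  simp only [uniformAngle, Measure.smul_apply, Measure.restrict_apply MeasurableSet.univ,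
    Set.univ_inter, Real.volume_Ico, sub_zero, smul_eq_mul]
  rw [← ENNReal.ofReal_mul (by positivity), inv_mul_cancel₀ (by positivity), ENNReal.ofReal_one]

lemma integral_exp_int_mul_I_uniformAngle (n : ℤ) :
    ∫ t, exp (n * t * I) ∂uniformAngle = if n = 0 then 1 else 0 := by
  split_ifs with hn
  · simp [hn]
  have hnI : (n : ℂ) * I ≠ 0 := mul_ne_zero (by exact_mod_cast hn) I_ne_zero
  have hperiod : ∫ t in (0)..(2 * Real.pi), exp (n * t * I) = 0 := by
    simp_rw [mul_right_comm (n : ℂ) _ I, integral_exp_mul_complex hnI]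
    have : (n : ℂ) * I * ↑(2 * Real.pi) = n * (2 * Real.pi * I) := by push_cast; ring
    rw [this, exp_int_mul_two_pi_mul_I]
    simp
  rw [uniformAngle, integral_smul_measure, integral_Ico_eq_integral_Ioo,
    ← integral_Ioc_eq_integral_Ioo, ← intervalIntegral.integral_of_le (by positivity), hperiod,
    smul_zero]

lemma integral_exp_mul_pow_mul_conj_pow_uniformAngle (w : ℂ) (a b : ℕ) :
    ∫ t : ℝ, (exp (-t * I) * w) ^ a * conj (exp (-t * I) * w) ^ b ∂uniformAngle
      = if a = b then (‖w‖ : ℂ) ^ (2 * a) else 0 := by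
  have hconj (t : ℝ) : conj (exp (-t * I)) = exp (t * I) := by
    rw [← exp_conj, map_mul, map_neg, conj_ofReal, conj_I, neg_mul_neg]
  have hexp (t : ℝ) : (exp (-t * I) * w) ^ a * conj (exp (-t * I) * w) ^ b
      = w ^ a * conj w ^ b * exp (((b - a : ℤ) : ℂ) * t * I) := by
    rw [map_mul, hconj, mul_pow, mul_pow, ← exp_nat_mul, ← exp_nat_mul,
      show ((b - a : ℤ) : ℂ) * t * I = a * (-t * I) + b * (t * I) by push_cast; ring, exp_add]
    ring
  simp_rw [hexp, integral_const_mul, integral_exp_int_mul_I_uniformAngle, sub_eq_zero,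
    Nat.cast_inj, eq_comm (a := b)]
  split_ifs with hab
  · subst hab
    rw [mul_one, ← mul_pow, mul_conj', pow_mul]
  · simp

lemma Nat.multinomial_le_factorial_sum {α : Type*} (s : Finset α) (f : α → ℕ) :
    Nat.multinomial s f ≤ (∑ i ∈ s, f i)! :=
  Nat.le_of_dvd (Nat.factorial_pos _) (Dvd.intro_left _ (Nat.multinomial_spec s f))

lemma sum_multinomial_sq_mul_prod_pow_le {ι : Type*} [Fintype ι] [DecidableEq ι] (x : ι → ℝ)
    (hx : 0 ≤ x) (k : ℕ) :
    ∑ α ∈ piAntidiag univ k, (Nat.multinomial univ α : ℝ) ^ 2 * ∏ m, x m ^ α m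
      ≤ k ! * (∑ m, x m) ^ k := by
  rw [sum_pow_eq_sum_piAntidiag, mul_sum]
  refine sum_le_sum fun α hα => ?_
  have hle : (Nat.multinomial univ α : ℝ) ≤ k ! := by
    rw [← (mem_piAntidiag.mp hα).1]
    exact_mod_cast Nat.multinomial_le_factorial_sum univ α
  rw [sq, mul_assoc]
  exact mul_le_mul_of_nonneg_right hle
    (mul_nonneg (Nat.cast_nonneg _) (prod_nonneg fun m _ => pow_nonneg (hx m) _))

lemma ofReal_norm_sum_pow_two_mul {ι : Type*} [Fintype ι] [DecidableEq ι] (z : ι → ℂ) (k : ℕ) :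
    ((‖∑ m, z m‖ ^ (2 * k) : ℝ) : ℂ) = ∑ α ∈ piAntidiag univ k, ∑ β ∈ piAntidiag univ k,
      (Nat.multinomial univ α * Nat.multinomial univ β : ℂ) *
        ∏ m, z m ^ α m * conj (z m) ^ β m := by
  have hnorm : ((‖∑ m, z m‖ ^ (2 * k) : ℝ) : ℂ) = (∑ m, z m) ^ k * (∑ m, conj (z m)) ^ k := by
    rw [← map_sum, ← mul_pow, mul_conj, normSq_eq_norm_sq, pow_mul]
    push_cast; rfl
  rw [hnorm, sum_pow_eq_sum_piAntidiag, sum_pow_eq_sum_piAntidiag, sum_mul_sum]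
  refine sum_congr rfl fun α _ => sum_congr rfl fun β _ => ?_
  rw [prod_mul_distrib]
  ring

section IndependentPhases

variable {Ω ι : Type*} [MeasurableSpace Ω] {P : Measure Ω} [Fintype ι] {θ : ι → Ω → ℝ}

lemma norm_exp_neg_mul_I_mul (t : ℝ) (w : ℂ) : ‖exp (-t * I) * w‖ = ‖w‖ := by
  rw [norm_mul, ← ofReal_neg, norm_exp_ofReal_mul_I, one_mul]

lemma integral_prod_exp_mul_pow_mul_conj_pow (hθ : ∀ m, Measurable (θ m))
    (hindep : iIndepFun θ P) (hunif : ∀ m, P.map (θ m) = uniformAngle) (u : ι → ℂ)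
    (α β : ι → ℕ) :
    ∫ ω, ∏ m, (exp (-θ m ω * I) * u m) ^ α m * conj (exp (-θ m ω * I) * u m) ^ β m ∂P
      = if α = β then ∏ m, (‖u m‖ : ℂ) ^ (2 * α m) else 0 := by
  have hfactor (m : ι) :
      ∫ ω, (exp (-θ m ω * I) * u m) ^ α m * conj (exp (-θ m ω * I) * u m) ^ β m ∂P
        = if α m = β m then (‖u m‖ : ℂ) ^ (2 * α m) else 0 := by
    rw [← integral_exp_mul_pow_mul_conj_pow_uniformAngle, ← hunif m,
      integral_map (hθ m).aemeasurable (by fun_prop)]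
  rw [hindep.integral_fun_prod_comp (fun m => (hθ m).aemeasurable)
    (f := fun m (t : ℝ) => (exp (-t * I) * u m) ^ α m * conj (exp (-t * I) * u m) ^ β m)
    (fun m => by fun_prop)]
  simp_rw [hfactor, prod_ite_zero, funext_iff, mem_univ, true_imp_iff]

lemma integrable_prod_exp_mul_pow_mul_conj_pow (hθ : ∀ m, Measurable (θ m))
    (hindep : iIndepFun θ P) (u : ι → ℂ) (α β : ι → ℕ) :
    Integrable (fun ω => ∏ m, (exp (-θ m ω * I) * u m) ^ α m
      * conj (exp (-θ m ω * I) * u m) ^ β m) P := by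
  have := hindep.isProbabilityMeasure
  refine .of_bound (by fun_prop) (∏ m, ‖u m‖ ^ α m * ‖u m‖ ^ β m) (ae_of_all _ fun ω => ?_)
  rw [norm_prod]
  exact le_of_eq (prod_congr rfl fun m _ => by
    rw [norm_mul, norm_pow, norm_pow, RCLike.norm_conj, norm_exp_neg_mul_I_mul])

lemma integral_norm_sum_exp_mul_pow [DecidableEq ι] (hθ : ∀ m, Measurable (θ m))
    (hindep : iIndepFun θ P) (hunif : ∀ m, P.map (θ m) = uniformAngle) (u : ι → ℂ) (k : ℕ) :
    ∫ ω, ‖∑ m, exp (-θ m ω * I) * u m‖ ^ (2 * k) ∂P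
      = ∑ α ∈ piAntidiag univ k, (Nat.multinomial univ α : ℝ) ^ 2 * ∏ m, (‖u m‖ ^ 2) ^ α m := by
  apply ofReal_injective
  rw [← integral_complex_ofReal]
  simp_rw [ofReal_norm_sum_pow_two_mul]
  rw [integral_finsetSum _ fun α _ => integrable_finsetSum _ fun β _ =>
    (integrable_prod_exp_mul_pow_mul_conj_pow hθ hindep u α β).const_mul _]
  simp_rw [integral_finsetSum _ fun β _ =>
    (integrable_prod_exp_mul_pow_mul_conj_pow hθ hindep u _ β).const_mul _, integral_const_mul,
    integral_prod_exp_mul_pow_mul_conj_pow hθ hindep hunif, mul_ite, mul_zero, sum_ite_eq]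
  push_cast
  refine sum_congr rfl fun α hα => ?_
  rw [if_pos hα]
  simp_rw [pow_mul]
  ring

lemma integral_norm_sum_exp_mul_pow_le (hθ : ∀ m, Measurable (θ m))
    (hindep : iIndepFun θ P) (hunif : ∀ m, P.map (θ m) = uniformAngle) (u : ι → ℂ) (k : ℕ) :
    ∫ ω, ‖∑ m, exp (-θ m ω * I) * u m‖ ^ (2 * k) ∂P ≤ k ! * (∑ m, ‖u m‖ ^ 2) ^ k := by
  classical
  rw [integral_norm_sum_exp_mul_pow hθ hindep hunif]
  exact sum_multinomial_sq_mul_prod_pow_le _ (fun m => sq_nonneg _) k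

lemma integrable_norm_sum_exp_mul_pow (hθ : ∀ m, Measurable (θ m)) (hindep : iIndepFun θ P)
    (u : ι → ℂ) (n : ℕ) : Integrable (fun ω => ‖∑ m, exp (-θ m ω * I) * u m‖ ^ n) P := by
  have := hindep.isProbabilityMeasure
  refine .of_bound (by fun_prop) ((∑ m, ‖u m‖) ^ n) (ae_of_all _ fun ω => ?_)
  rw [norm_pow, norm_norm]
  gcongr
  exact (norm_sum_le _ _).trans_eq (by simp_rw [norm_exp_neg_mul_I_mul])

end IndependentPhases

lemma integral_exp_le_inv_one_sub_of_moment_le {Ω : Type*} [MeasurableSpace Ω] {P : Measure Ω}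
    {Y : Ω → ℝ} (hY : 0 ≤ Y) (hint : ∀ k : ℕ, Integrable (fun ω => Y ω ^ k) P) {c : ℝ}
    (hc0 : 0 ≤ c) (hc1 : c < 1) (hmom : ∀ k : ℕ, ∫ ω, Y ω ^ k ∂P ≤ k ! * c ^ k) :
    ∫ ω, Real.exp (Y ω) ∂P ≤ (1 - c)⁻¹ := by
  have hYm : AEMeasurable Y P := by simpa using (hint 1).aemeasurable
  have hterm_nonneg (ω : Ω) (k : ℕ) : 0 ≤ Y ω ^ k / k ! :=
    div_nonneg (pow_nonneg (hY ω) k) (Nat.cast_nonneg _)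
  have hterm (k : ℕ) : ∫⁻ ω, ENNReal.ofReal (Y ω ^ k / k !) ∂P ≤ ENNReal.ofReal c ^ k := by
    rw [← ofReal_integral_eq_lintegral_ofReal ((hint k).div_const _)
      (ae_of_all _ fun ω => hterm_nonneg ω k), integral_div, ← ENNReal.ofReal_pow hc0]
    exact ENNReal.ofReal_le_ofReal
      ((div_le_iff₀ (by positivity)).mpr ((hmom k).trans_eq (mul_comm _ _)))
  -- Working in `ℝ≥0∞`, the exponential series may be integrated termwise with no integrability
  -- of `exp ∘ Y` to check.
  have hlintegral : ∫⁻ ω, ENNReal.ofReal (Real.exp (Y ω)) ∂P ≤ ENNReal.ofReal (1 - c)⁻¹ :=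
    calc ∫⁻ ω, ENNReal.ofReal (Real.exp (Y ω)) ∂P
        = ∫⁻ ω, ∑' k : ℕ, ENNReal.ofReal (Y ω ^ k / k !) ∂P := by
          refine lintegral_congr fun ω => ?_
          rw [Real.exp_eq_exp_ℝ, NormedSpace.exp_eq_tsum_div,
            ENNReal.ofReal_tsum_of_nonneg (hterm_nonneg ω) (Real.summable_pow_div_factorial _)]
      _ = ∑' k : ℕ, ∫⁻ ω, ENNReal.ofReal (Y ω ^ k / k !) ∂P :=
          lintegral_tsum fun k => ((hYm.pow_const k).div_const _).ennreal_ofReal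
      _ ≤ ∑' k : ℕ, ENNReal.ofReal c ^ k := ENNReal.tsum_le_tsum hterm
      _ = ENNReal.ofReal (1 - c)⁻¹ := by
          rw [ENNReal.tsum_geometric, ENNReal.ofReal_inv_of_pos (by linarith),
            ENNReal.ofReal_sub _ hc0, ENNReal.ofReal_one]
  rw [integral_eq_lintegral_of_nonneg_ae (ae_of_all _ fun ω => (Real.exp_pos _).le)
    hYm.exp.aestronglyMeasurable]
  exact ENNReal.toReal_le_of_le_ofReal (inv_nonneg.mpr (by linarith)) hlintegral

lemma inv_one_sub_le_inv_sqrt_one_sub_two_mul {r : ℝ} (hr : 2 * r < 1) :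
    (1 - r)⁻¹ ≤ (√(1 - 2 * r))⁻¹ :=
  inv_anti₀ (Real.sqrt_pos.mpr (by linarith))
    (Real.sqrt_le_iff.mpr ⟨by linarith, by nlinarith [sq_nonneg r]⟩)

theorem stmt3_general {Ω : Type*} [MeasurableSpace Ω] (P : Measure Ω)
    (M : ℕ) (θ : Fin M → Ω → ℝ) (hθmeas : ∀ m, Measurable (θ m))
    (hindep : iIndepFun θ P)
    (hunif : ∀ m, Measure.map (θ m) P = uniformAngle)
    (u : Fin M → ℂ) (hu : ∑ m, ‖u m‖ ^ 2 = 1)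
    (X : Ω → ℝ)
    (hX : ∀ ω, X ω = ‖∑ m, (Real.sqrt M : ℂ)⁻¹ * Complex.exp (-(θ m ω : ℂ) * Complex.I) * u m‖)
    (h : ℝ) (hh0 : 0 ≤ h) (hhM : h < M / 2) :
    ∫ ω, Real.exp (h * X ω ^ 2) ∂P ≤ (Real.sqrt (1 - 2 * h / M))⁻¹ := by
  have hM : (0 : ℝ) < M := by linarith
  have hhX (ω : Ω) : h * X ω ^ 2 = h / M * ‖∑ m, exp (-θ m ω * I) * u m‖ ^ 2 := by
    simp_rw [hX, mul_assoc, ← mul_sum, norm_mul, norm_inv, norm_real, Real.norm_eq_abs,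
      abs_of_nonneg (Real.sqrt_nonneg _), mul_pow, inv_pow, Real.sq_sqrt hM.le, div_eq_mul_inv,
      mul_assoc]
  have hmoment (k : ℕ) (ω : Ω) : (h / M * ‖∑ m, exp (-θ m ω * I) * u m‖ ^ 2) ^ k
      = (h / M) ^ k * ‖∑ m, exp (-θ m ω * I) * u m‖ ^ (2 * k) := by
    rw [mul_pow, pow_mul]
  simp_rw [hhX]
  refine (integral_exp_le_inv_one_sub_of_moment_le (c := h / M) (fun ω => by positivity)
    (fun k => ?_) (by positivity) ((div_lt_one hM).mpr (by linarith)) (fun k => ?_)).trans ?_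
  · simp_rw [hmoment]
    exact (integrable_norm_sum_exp_mul_pow hθmeas hindep u _).const_mul _
  · have hbound := integral_norm_sum_exp_mul_pow_le hθmeas hindep hunif u k
    rw [hu, one_pow, mul_one] at hbound
    simp_rw [hmoment, integral_const_mul]
    exact (mul_le_mul_of_nonneg_left hbound (by positivity)).trans_eq (mul_comm _ _)
  · rw [mul_div_assoc]
    exact inv_one_sub_le_inv_sqrt_one_sub_two_mul (by rw [← mul_div_assoc, div_lt_one hM]; linarith)

/-- Let `θ₁, …, θ_M` be i.i.d. uniform on `[0, 2π)`, `u ∈ ℂ^M` a fixed unit vector and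
`X = |∑_m (1/√M) e^{-iθ_m} u_m|`.  Then for every `h ∈ [0, M/2)`,
`E[e^{h X²}] ≤ (1 - 2h/M)^{-1/2}`. -/
theorem stmt3 {Ω : Type*} [MeasurableSpace Ω] (P : Measure Ω) [IsProbabilityMeasure P]
    (M : ℕ) (θ : Fin M → Ω → ℝ) (hθmeas : ∀ m, Measurable (θ m))
    (hindep : iIndepFun θ P)
    (hunif : ∀ m, Measure.map (θ m) P = uniformAngle)
    (u : Fin M → ℂ) (hu : ∑ m, ‖u m‖ ^ 2 = 1)
    (X : Ω → ℝ)
    (hX : ∀ ω, X ω = ‖∑ m, (Real.sqrt M : ℂ)⁻¹ * Complex.exp (-(θ m ω : ℂ) * Complex.I) * u m‖)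
    (h : ℝ) (hh0 : 0 ≤ h) (hhM : h < M / 2) :
    ∫ ω, Real.exp (h * X ω ^ 2) ∂P ≤ (Real.sqrt (1 - 2 * h / M))⁻¹ :=
  stmt3_general P M θ hθmeas hindep hunif u hu X hX h hh0 hhM
end

section
/- Fix K ≥ 1, N ≥ 1, ε ∈ (0,1) with ε/(KN) < 1. The unique minimizer on (2, ∞) of f(g) = gK² ln( KN / (ε √(1 - 2/g)) ) is g_opt = 2 / (1 + 1/W₋₁( -(ε/(KN))² e^{-1} )), where W₋₁ is the lower branch of the Lambert W function (defined by z = W₋₁(z e^z) for z < -1). Moreover, at the optimum, f(g_opt) = g_opt K² / (g_opt - 2). -/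
/-!
Write `α = -1/w ∈ (0,1)` and substitute `β = 1 - 2/g`, which maps `(2, ∞)` onto `(0,1)`.
Taking logarithms in the Lambert equation gives `2 log (KN/ε) = 1/α + log α - 1`, so that
`f g = K²/(1-β) · (1/α - 1 + log (α/β))`. At `β = α` this is `K²/α`, and
`log (α/β) > 1 - β/α` for `β ≠ α` says exactly that every other `β` gives a larger value.
-/

open Real

lemma exists_eq_neg_one_div_of_lt_neg_one {w : ℝ} (hw : w < -1) :
    ∃ α, 0 < α ∧ α < 1 ∧ w = -1 / α :=
  ⟨-1 / w, div_pos_of_neg_of_neg (by norm_num) (by linarith),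
    by rw [div_lt_one_of_neg (by linarith)]; linarith, by field_simp⟩

lemma log_inv_eq_of_inv_mul_exp {α r : ℝ} (hα : 0 < α)
    (h : -1 / α * exp (-1 / α) = -r ^ 2 * exp (-1)) :
    r ≠ 0 ∧ 2 * log r⁻¹ = 1 / α + log α - 1 := by
  have h' : α⁻¹ * exp (-α⁻¹) = r ^ 2 * exp (-1) := by
    rw [neg_div, one_div] at h
    linarith
  have hr : r ≠ 0 := by
    rintro rfl
    have : 0 < α⁻¹ * exp (-α⁻¹) := by positivity
    simp_all
  refine ⟨hr, ?_⟩
  have hlog := congrArg log h'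
  rw [log_mul (by positivity) (exp_ne_zero _), log_mul (by positivity) (exp_ne_zero _),
    log_exp, log_exp, log_inv, log_pow] at hlog
  rw [log_inv, one_div]
  push_cast at hlog
  linarith

/-- The objective `g K² log (KN / (ε √(1 - 2/g)))` on `(2, ∞)` after eliminating `log (KN/ε)`
through the Lambert equation; here `A = K²`. -/
noncomputable def reducedObjective (A α g : ℝ) : ℝ :=
  g * A / 2 * (1 / α - 1 + log (α / (1 - 2 / g)))

lemma mul_log_div_sqrt_eq_reducedObjective {A c α g : ℝ} (hα : 0 < α) (hc : c ≠ 0)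
    (hlog : 2 * log c = 1 / α + log α - 1) (hg : 2 < g) :
    g * A * log (c / √(1 - 2 / g)) = reducedObjective A α g := by
  have hβ : 0 < 1 - 2 / g := by
    rw [sub_pos, div_lt_one (by linarith)]
    exact hg
  rw [reducedObjective, log_div hc (sqrt_pos.mpr hβ).ne', log_sqrt hβ.le,
    log_div hα.ne' hβ.ne']
  linear_combination g * A / 2 * hlog

lemma reducedObjective_two_div_one_sub {A α : ℝ} (hα0 : 0 < α) (hα1 : α < 1) :
    reducedObjective A α (2 / (1 - α)) = A / α := by
  have h1α : 1 - α ≠ 0 := by linarith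
  have hβ : 1 - 2 / (2 / (1 - α)) = α := by
    field_simp
    ring
  rw [reducedObjective, hβ, div_self hα0.ne', log_one]
  field_simp
  ring

lemma div_lt_reducedObjective {A α g : ℝ} (hA : 0 < A) (hα : 0 < α) (hg : 2 < g)
    (hne : g ≠ 2 / (1 - α)) :
    A / α < reducedObjective A α g := by
  unfold reducedObjective
  set β := 1 - 2 / g with hβ_def
  have hβ : 0 < β := by
    rw [hβ_def, sub_pos, div_lt_one (by linarith)]
    exact hg
  have hβα : β ≠ α := by
    have hg0 : g ≠ 0 := by linarith
    rintro rfl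
    exact hne (by rw [hβ_def]; field_simp; ring)
  have hlog : 1 - β / α < log (α / β) := by
    have := log_lt_sub_one_of_pos (div_pos hβ hα) (by rwa [ne_eq, div_eq_one_iff_eq hα.ne'])
    have hswap : log (α / β) = -log (β / α) := by rw [← log_inv, inv_div]
    linarith
  calc A / α = g * A / 2 * (1 / α - β / α) := by
        rw [hβ_def]
        field_simp
        ring
    _ < g * A / 2 * (1 / α - 1 + log (α / β)) := by
        gcongr
        linarith

theorem stmt13_general (K N : ℕ) (ε : ℝ)
    (f : ℝ → ℝ)
    (hf : ∀ g, f g = g * (K : ℝ) ^ 2 *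
      Real.log ((K : ℝ) * N / (ε * Real.sqrt (1 - 2 / g))))
    (w : ℝ) (hw : w < -1)
    (hwe : w * Real.exp w = -(ε / ((K : ℝ) * N)) ^ 2 * Real.exp (-1))
    (gopt : ℝ) (hgopt : gopt = 2 / (1 + 1 / w)) :
    gopt ∈ Set.Ioi (2 : ℝ) ∧
    (∀ g ∈ Set.Ioi (2 : ℝ), f gopt ≤ f g) ∧
    (∀ g ∈ Set.Ioi (2 : ℝ), g ≠ gopt → f gopt < f g) ∧
    f gopt = gopt * (K : ℝ) ^ 2 / (gopt - 2) := by
  obtain ⟨α, hα0, hα1, rfl⟩ := exists_eq_neg_one_div_of_lt_neg_one hw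
  obtain ⟨hr, hlog⟩ := log_inv_eq_of_inv_mul_exp hα0 hwe
  rw [inv_div] at hlog
  have hc : (K : ℝ) * N / ε ≠ 0 := inv_div ε _ ▸ inv_ne_zero hr
  have hA : 0 < (K : ℝ) ^ 2 := by
    have hK : (K : ℝ) ≠ 0 := fun h => by simp [h] at hc
    positivity
  have hfg : Set.EqOn f (reducedObjective ((K : ℝ) ^ 2) α) (Set.Ioi 2) := fun g hg => by
    rw [hf, ← div_div]
    exact mul_log_div_sqrt_eq_reducedObjective hα0 hc hlog hg
  rw [one_div_div, div_neg, div_one, ← sub_eq_add_neg] at hgopt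
  subst hgopt
  have h1α : 0 < 1 - α := sub_pos.mpr hα1
  have hgopt2 : 2 < 2 / (1 - α) := by
    rw [lt_div_iff₀ h1α]
    linarith
  have hlt : ∀ g ∈ Set.Ioi (2 : ℝ), g ≠ 2 / (1 - α) → f (2 / (1 - α)) < f g :=
    fun g hg hne => by
      rw [hfg hgopt2, hfg hg, reducedObjective_two_div_one_sub hα0 hα1]
      exact div_lt_reducedObjective hA hα0 hg hne
  refine ⟨hgopt2, fun g hg => ?_, hlt, ?_⟩
  · rcases eq_or_ne g (2 / (1 - α)) with rfl | hne
    · rfl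
    · exact (hlt g hg hne).le
  · rw [hfg hgopt2, reducedObjective_two_div_one_sub hα0 hα1, eq_div_iff (by linarith)]
    field_simp
    ring

/-- Fix `K, N ≥ 1` and `ε ∈ (0,1)` with `ε/(KN) < 1`.  Encode the lower Lambert branch
value `w = W₋₁(-(ε/(KN))² e⁻¹)` by its defining property `w < -1` and
`w e^w = -(ε/(KN))² e⁻¹`.  Then `g_opt = 2/(1 + 1/w)` is the unique minimizer on
`(2, ∞)` of `f(g) = gK² ln(KN/(ε√(1 - 2/g)))`, and `f(g_opt) = g_opt K²/(g_opt - 2)`. -/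
theorem stmt13 (K N : ℕ) (hK : 1 ≤ K) (hN : 1 ≤ N) (ε : ℝ) (hε0 : 0 < ε) (hε1 : ε < 1)
    (hεKN : ε / ((K : ℝ) * N) < 1)
    (f : ℝ → ℝ)
    (hf : ∀ g, f g = g * (K : ℝ) ^ 2 *
      Real.log ((K : ℝ) * N / (ε * Real.sqrt (1 - 2 / g))))
    (w : ℝ) (hw : w < -1)
    (hwe : w * Real.exp w = -(ε / ((K : ℝ) * N)) ^ 2 * Real.exp (-1))
    (gopt : ℝ) (hgopt : gopt = 2 / (1 + 1 / w)) :
    gopt ∈ Set.Ioi (2 : ℝ) ∧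
    (∀ g ∈ Set.Ioi (2 : ℝ), f gopt ≤ f g) ∧
    (∀ g ∈ Set.Ioi (2 : ℝ), g ≠ gopt → f gopt < f g) ∧
    f gopt = gopt * (K : ℝ) ^ 2 / (gopt - 2) :=
  stmt13_general K N ε f hf w hw hwe gopt hgopt
end
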